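/- Let S be a transitive subsemigroup of IS(X) such that S contains a nonzero element of finite rank. Then for all i, j ∈ X there exists a ∈ S of finite rank such that a maps i to j and the inverse partial bijection a⁻¹ also belongs to S. -/

import Mathlib

def IsSubsemigroup {X : Type*} (S : Set (X ≃. X)) : Prop :=
  ∀ f ∈ S, ∀ g ∈ S, f.trans g ∈ S

def IsTransitiveSet {X : Type*} (S : Set (X ≃. X)) : Prop :=
  ∀ x y : X, ∃ f ∈ S, f x = some y

def pdom {X : Type*} (f : X ≃. X) : Set X := {x | f x ≠ none}

/-!
Route `i` to `j` through a point of the domain of the given finite-rank element: this gives a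
finite-rank `b ∈ S` with `b i = j`, and with `w ∈ S` mapping `j` back to `i` the element
`c = b w` fixes `i`. Powers of a finite-rank partial bijection take only finitely many values, so
`c ^ (k + 2 (n + 1)) = c ^ k` for some `n ≥ 1` and all `k ≥ n`. Then `a = c ^ n b` and
`a' = w c ^ (n + 1)` satisfy `a a' a = a` and `a' a a' = a'`, which in `IS(X)` forces `a' = a⁻¹`,
while `a i = b i = j` because `c` fixes `i`.
-/

section MonoidPowers

variable {M : Type*} [Monoid M] {c : M}

theorem pow_add_mul_eq_pow_of_pow_add_eq {m p : ℕ} (h : c ^ (m + p) = c ^ m) {n : ℕ}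
    (hn : m ≤ n) (k : ℕ) : c ^ (n + p * k) = c ^ n := by
  obtain ⟨d, rfl⟩ := Nat.exists_eq_add_of_le hn
  induction k with
  | zero => simp
  | succ k ih =>
    calc c ^ (m + d + p * (k + 1)) = c ^ (m + p) * c ^ (d + p * k) := by
          rw [← pow_add]; ring_nf
      _ = c ^ (m + d) := by rw [h, ← pow_add, ← add_assoc, ih]

/-- Eventual periodicity, with the period chosen as `2 (n + 1)` for `PEquiv.symm_pow_mul_eq`. -/
theorem exists_pow_add_two_mul_succ_eq_pow (hc : (Set.range fun n : ℕ ↦ c ^ (n + 1)).Finite) :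
    ∃ n, 1 ≤ n ∧ ∀ k, n ≤ k → c ^ (k + 2 * (n + 1)) = c ^ k := by
  obtain ⟨m, m', hlt, heq⟩ :=
    hc.exists_lt_map_eq_of_forall_mem (f := fun n : ℕ ↦ c ^ (n + 1)) fun n ↦ Set.mem_range_self n
  obtain ⟨d, rfl⟩ := Nat.exists_eq_add_of_lt hlt
  have hperiod : c ^ (m + 1 + (d + 1)) = c ^ (m + 1) := by
    rw [heq]; ring_nf
  refine ⟨(m + 1) * (d + 1) + d, by nlinarith, fun k hk ↦ ?_⟩
  have hp : 2 * ((m + 1) * (d + 1) + d + 1) = (d + 1) * (2 * (m + 2)) := by ring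
  rw [hp]
  exact pow_add_mul_eq_pow_of_pow_add_eq hperiod (by nlinarith) _

end MonoidPowers

namespace PEquiv

variable {α β : Type*}

/-- `IS(α)` as a monoid, composing in diagrammatic order: `f * g` is `f` followed by `g`. -/
instance : Monoid (α ≃. α) where
  mul f g := f.trans g
  mul_assoc := trans_assoc
  one := PEquiv.refl α
  one_mul := refl_trans
  mul_one := trans_refl

theorem mul_apply (f g : α ≃. α) (x : α) : (f * g) x = (f x).bind g := rfl

theorem exists_apply_eq_some_of_ne_bot {f : α ≃. β} (hf : f ≠ ⊥) : ∃ x y, f x = some y := by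
  by_contra! h
  exact hf (ext fun x ↦ Option.eq_none_iff_forall_ne_some.2 (h x))

theorem pow_apply_eq_some_of_apply_eq_some {c : α ≃. α} {x : α} (hx : c x = some x) (n : ℕ) :
    (c ^ n) x = some x := by
  induction n with
  | zero => rfl
  | succ n ih => rw [pow_succ, mul_apply, ih, Option.bind_some, hx]

theorem symm_eq_of_trans_trans {a : α ≃. β} {x : β ≃. α} (hax : a.trans (x.trans a) = a)
    (hxa : x.trans (a.trans x) = x) : a.symm = x := by
  refine ext fun q ↦ Option.ext fun p ↦ ?_
  rw [eq_some_iff]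
  constructor
  · intro hpq
    have h : (a.trans (x.trans a)) p = some q := by rw [hax, hpq]
    obtain ⟨q', hq', h⟩ := (trans_eq_some _ _ _ _).1 h
    obtain rfl := Option.some_injective _ (hpq.symm.trans hq')
    obtain ⟨r, hr, har⟩ := (trans_eq_some _ _ _ _).1 h
    rwa [a.inj (b := q) har hpq] at hr
  · intro hqp
    have h : (x.trans (a.trans x)) q = some p := by rw [hxa, hqp]
    obtain ⟨p', hp', h⟩ := (trans_eq_some _ _ _ _).1 h
    obtain rfl := Option.some_injective _ (hqp.symm.trans hp')
    obtain ⟨s, hs, hxs⟩ := (trans_eq_some _ _ _ _).1 h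
    rwa [x.inj (b := p) hxs hqp] at hs

theorem symm_pow_mul_eq {b w : α ≃. α} {n : ℕ}
    (hn : ∀ k, n ≤ k → (b * w) ^ (k + 2 * (n + 1)) = (b * w) ^ k) :
    ((b * w) ^ n * b).symm = w * (b * w) ^ (n + 1) := by
  set c := b * w
  apply symm_eq_of_trans_trans
  · calc c ^ n * b * (w * c ^ (n + 1) * (c ^ n * b))
          = c ^ n * c * c ^ (n + 1) * c ^ n * b := by simp only [c, mul_assoc]
        _ = c ^ (n + 2 * (n + 1)) * b := by rw [← pow_succ, ← pow_add, ← pow_add]; ring_nf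
        _ = c ^ n * b := by rw [hn n le_rfl]
  · calc w * c ^ (n + 1) * (c ^ n * b * (w * c ^ (n + 1)))
          = w * (c ^ (n + 1) * c ^ n * c * c ^ (n + 1)) := by simp only [c, mul_assoc]
        _ = w * c ^ (n + 1 + 2 * (n + 1)) := by rw [← pow_add, ← pow_succ, ← pow_add]; ring_nf
        _ = w * c ^ (n + 1) := by rw [hn (n + 1) (Nat.le_succ n)]

end PEquiv

open PEquiv

section Rank

variable {X : Type*}

theorem pdom_mul_subset (f g : X ≃. X) : pdom (f * g) ⊆ pdom f := by
  intro x hx hfx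
  simp [pdom, mul_apply, hfx] at hx

theorem Set.Finite.pdom_mul (f : X ≃. X) {g : X ≃. X} (hg : (pdom g).Finite) :
    (pdom (f * g)).Finite := by
  refine (hg.image fun y ↦ (f.symm y).getD y).subset fun x hx ↦ ?_
  obtain ⟨y, hfx⟩ := Option.ne_none_iff_exists'.1 (pdom_mul_subset f g hx)
  refine ⟨y, ?_, by simp [(eq_some_iff f).2 hfx]⟩
  simpa [pdom, mul_apply, hfx] using hx

/-- A power `c ^ (n + 1)` is determined by its graph, which lies in `pdom c × c '' pdom c`. -/
theorem Set.Finite.range_pow_succ {c : X ≃. X} (hc : (pdom c).Finite) :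
    (Set.range fun n : ℕ ↦ c ^ (n + 1)).Finite := by
  let graph : (X ≃. X) → Set (X × X) := fun f ↦ {p | f p.1 = some p.2}
  have hgraph : Set.InjOn graph Set.univ := fun f _ g _ h ↦
    PEquiv.ext fun x ↦ Option.ext fun y ↦ Set.ext_iff.1 h (x, y)
  refine Set.Finite.of_finite_image ?_ (hgraph.mono (Set.subset_univ _))
  refine ((hc.prod (hc.image fun x ↦ (c x).getD x)).finite_subsets).subset ?_
  rintro _ ⟨_, ⟨n, rfl⟩, rfl⟩ ⟨x, y⟩ (hxy : (c ^ (n + 1)) x = some y)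
  refine ⟨?_, ?_⟩
  · intro hcx
    rw [pow_succ', mul_apply, hcx] at hxy
    simp at hxy
  · rw [pow_succ, mul_apply] at hxy
    obtain ⟨z, -, hzy⟩ := Option.bind_eq_some_iff.1 hxy
    exact ⟨z, by simp [pdom, hzy], by simp [hzy]⟩

end Rank

theorem IsSubsemigroup.pow_succ_mem {X : Type*} {S : Set (X ≃. X)} (hS : IsSubsemigroup S)
    {c : X ≃. X} (hc : c ∈ S) (n : ℕ) : c ^ (n + 1) ∈ S := by
  induction n with
  | zero => rwa [zero_add, pow_one]
  | succ n ih => rw [pow_succ]; exact hS _ ih _ hc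

/-- In a transitive subsemigroup of `IS(X)` containing a nonzero finitary element,
every pair `(i,j)` is realized by a finitary element whose inverse also lies in `S`. -/
theorem exists_elem_with_inverse {X : Type*} (S : Set (X ≃. X))
    (hS : IsSubsemigroup S) (hStr : IsTransitiveSet S)
    (hfin : ∃ f ∈ S, f ≠ (⊥ : X ≃. X) ∧ (pdom f).Finite) :
    ∀ i j : X, ∃ a ∈ S, (pdom a).Finite ∧ a i = some j ∧ a.symm ∈ S := by
  intro i j
  obtain ⟨f, hfS, hf, hffin⟩ := hfin
  obtain ⟨x, y, hxy⟩ := exists_apply_eq_some_of_ne_bot hf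
  obtain ⟨g, hgS, hgi⟩ := hStr i x
  obtain ⟨g', hg'S, hg'y⟩ := hStr y j
  obtain ⟨w, hwS, hwj⟩ := hStr j i
  set b := g * f * g'
  have hbS : b ∈ S := hS _ (hS g hgS f hfS) g' hg'S
  have hbi : b i = some j := by simp [b, mul_apply, hgi, hxy, hg'y]
  have hbfin : (pdom b).Finite := (hffin.pdom_mul g).subset (pdom_mul_subset _ _)
  have hcS : b * w ∈ S := hS b hbS w hwS
  have hci : (b * w) i = some i := by simp [mul_apply, hbi, hwj]
  obtain ⟨n, hn1, hn⟩ := exists_pow_add_two_mul_succ_eq_pow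
    (hbfin.subset (pdom_mul_subset b w)).range_pow_succ
  obtain ⟨n, rfl⟩ := Nat.exists_eq_add_of_le' hn1
  refine ⟨(b * w) ^ (n + 1) * b, hS _ (hS.pow_succ_mem hcS n) b hbS, hbfin.pdom_mul _, ?_, ?_⟩
  · rw [mul_apply, pow_apply_eq_some_of_apply_eq_some hci, Option.bind_some, hbi]
  · rw [symm_pow_mul_eq hn]
    exact hS w hwS _ (hS.pow_succ_mem hcS _)
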